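/- Let G be a graph and X ⊆ V(G) be a (3k, α)-linked set for some α ∈ [2/3, 1). Then the set T_X = {(A,B) ∈ S_{k+1}(G) : |X ∩ B| > α|X|} is a tangle of order k+1 in G. -/

import Mathlib

open SimpleGraph Set

universe u

/-- A branch-decomposition of a graph `G`: a ternary tree `T` (internal vertices of
degree 3) together with a bijection from the edges of `G` to the leaves of `T`. -/
structure BranchDecomp {V : Type u} (G : SimpleGraph V) : Type (u + 1) where
  t : Type
  fin : Fintype t
  T : SimpleGraph t
  isTree : T.IsTree
  ternary : ∀ v : t, (T.neighborSet v).ncard ≤ 1 ∨ (T.neighborSet v).ncard = 3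
  τ : G.edgeSet ≃ {v : t // (T.neighborSet v).ncard ≤ 1}

namespace BranchDecomp

variable {V : Type u} {G : SimpleGraph V} (B : BranchDecomp G)

/-- The edges of `G` whose leaves lie on the `a`-side of the tree edge `ab`. -/
def side (a b : B.t) : Set G.edgeSet :=
  {e | (B.T.deleteEdges {s(a, b)}).Reachable a (B.τ e).1}

/-- The boundary `∂(X_e)` of the bipartition of `E(G)` induced by the tree edge `ab`:
vertices incident to edges on both sides. -/
def bdry (a b : B.t) : Set V :=
  {v | (∃ e : G.edgeSet, e ∈ B.side a b ∧ v ∈ (e : Sym2 V)) ∧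
       (∃ e : G.edgeSet, e ∉ B.side a b ∧ v ∈ (e : Sym2 V))}

/-- The width of a branch-decomposition: the maximum, over edges of the tree, of the
size of the corresponding boundary. -/
noncomputable def width : ℕ :=
  sSup {n | ∃ a b : B.t, B.T.Adj a b ∧ n = (B.bdry a b).ncard}

end BranchDecomp

/-- The branchwidth of a graph: the minimum width of a branch-decomposition. -/
noncomputable def branchwidth {V : Type u} (G : SimpleGraph V) : ℕ :=
  sInf {n | ∃ B : BranchDecomp G, B.width = n}

/-- A tree-decomposition of a graph. -/
structure TreeDecomp {V : Type u} (G : SimpleGraph V) : Type (u + 1) where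
  t : Type
  fin : Fintype t
  T : SimpleGraph t
  isTree : T.IsTree
  β : t → Set V
  covers_edge : ∀ ⦃u v : V⦄, G.Adj u v → ∃ x, u ∈ β x ∧ v ∈ β x
  covers_vert : ∀ v : V, ∃ x, v ∈ β x
  subtree : ∀ v : V, (T.induce {x | v ∈ β x}).Connected

/-- The width of a tree-decomposition: maximum bag size minus one. -/
noncomputable def TreeDecomp.width {V : Type u} {G : SimpleGraph V} (D : TreeDecomp G) : ℕ :=
  sSup {n | ∃ x : D.t, n + 1 = (D.β x).ncard}

/-- The treewidth of a graph. -/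
noncomputable def treewidth {V : Type u} (G : SimpleGraph V) : ℕ :=
  sInf {n | ∃ D : TreeDecomp G, D.width = n}

/-- A minor model of `H` in `G`: disjoint connected branch sets with edges realized. -/
def IsMinorModel {V : Type u} {W : Type*} (G : SimpleGraph V) (H : SimpleGraph W)
    (φ : W → Set V) : Prop :=
  (∀ w, (G.induce (φ w)).Connected) ∧
  (Pairwise fun w₁ w₂ => Disjoint (φ w₁) (φ w₂)) ∧
  (∀ ⦃w₁ w₂ : W⦄, H.Adj w₁ w₂ → ∃ a ∈ φ w₁, ∃ b ∈ φ w₂, G.Adj a b)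

/-- `G` has `H` as a minor. -/
def HasMinor {V : Type u} {W : Type*} (G : SimpleGraph V) (H : SimpleGraph W) : Prop :=
  ∃ φ : W → Set V, IsMinorModel G H φ

/-- The `(k × k)`-grid. -/
def gridGraph (k : ℕ) : SimpleGraph (Fin k × Fin k) :=
  SimpleGraph.fromRel fun p q =>
    (p.1 = q.1 ∧ (p.2 : ℕ) + 1 = (q.2 : ℕ)) ∨ (p.2 = q.2 ∧ (p.1 : ℕ) + 1 = (q.1 : ℕ))

/-- A separation of `G`: a pair of vertex sets covering `V(G)` with no edge between the
two "private" parts. -/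
def IsSeparation {V : Type u} (G : SimpleGraph V) (A B : Set V) : Prop :=
  A ∪ B = Set.univ ∧ ∀ a ∈ A \ B, ∀ b ∈ B \ A, ¬ G.Adj a b

/-- The order of a separation `(A, B)`. -/
noncomputable def sepOrder {V : Type u} (A B : Set V) : ℕ := (A ∩ B).ncard

/-- Three sets of vertices cover `G` (as induced subgraphs `G[A₁] ∪ G[A₂] ∪ G[A₃] = G`). -/
def TripleCovers {V : Type u} (G : SimpleGraph V) (A₁ A₂ A₃ : Set V) : Prop :=
  A₁ ∪ A₂ ∪ A₃ = Set.univ ∧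
  ∀ ⦃x y : V⦄, G.Adj x y →
    ({x, y} : Set V) ⊆ A₁ ∨ ({x, y} : Set V) ⊆ A₂ ∨ ({x, y} : Set V) ⊆ A₃

/-- A tangle of order `k` in `G`: an orientation of all separations of order `< k`
(containing exactly one of `(A,B)` and `(B,A)` for each) such that no three small sides
cover `G`. -/
def IsTangle {V : Type u} (G : SimpleGraph V) (k : ℕ) (𝒯 : Set (Set V × Set V)) : Prop :=
  (∀ p ∈ 𝒯, IsSeparation G p.1 p.2 ∧ sepOrder p.1 p.2 < k) ∧
  (∀ A B : Set V, IsSeparation G A B → sepOrder A B < k →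
      ((A, B) ∈ 𝒯 ↔ (B, A) ∉ 𝒯)) ∧
  (∀ p₁ ∈ 𝒯, ∀ p₂ ∈ 𝒯, ∀ p₃ ∈ 𝒯,
      ¬ TripleCovers G (Prod.fst p₁) (Prod.fst p₂) (Prod.fst p₃))

/-- `S` is an `α`-balanced separator for `X` in `G`: every component of `G - S` contains
at most `α|X|` vertices of `X`. -/
def IsBalancedSeparator {V : Type u} (G : SimpleGraph V) (α : ℝ) (X S : Set V) : Prop :=
  ∀ C : (G.induce Sᶜ).ConnectedComponent,
    (((Subtype.val '' C.supp) ∩ X).ncard : ℝ) ≤ α * X.ncard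

/-- `X` is `(k, α)`-linked in `G`: there is no `α`-balanced separator for `X` of size at
most `k`. -/
def IsLinked {V : Type u} (G : SimpleGraph V) (k : ℕ) (α : ℝ) (X : Set V) : Prop :=
  ¬ ∃ S : Set V, S.ncard ≤ k ∧ IsBalancedSeparator G α X S

/-! Call a set of vertices big if it contains more than `α|X|` vertices of `X`; as `α ≥ 1/2`,
two disjoint subsets of `X` cannot both be big. For any `S` of at most `3k` vertices, linkedness
gives a component of `G - S` with a big trace on `X`. Such a component lies on one side of every
separation whose separator is contained in `S`, so that side is big, and it is the side `B \ A`
whenever `X ∩ B` is big. Taking `S = A ∩ B` shows that exactly one of `X ∩ A` and `X ∩ B` is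
big; taking for `S` the union of three separators yields a vertex outside all three small
sides, so they cannot cover `G`. -/

theorem SimpleGraph.Reachable.mem_of_forall_adj {W : Type*} {H : SimpleGraph W} {s : Set W}
    (hs : ∀ ⦃v w⦄, H.Adj v w → v ∈ s → w ∈ s) {u v : W} (h : H.Reachable u v) (hu : u ∈ s) :
    v ∈ s := by
  obtain ⟨p⟩ := h
  induction p with
  | nil => exact hu
  | cons hadj _ ih => exact ih (hs hadj hu)

theorem Set.inter_nonempty_of_ncard_lt_ncard_add_ncard {W : Type*} {X Y Z : Set W}
    (hX : X.Finite) (hY : Y ⊆ X) (hZ : Z ⊆ X) (h : X.ncard < Y.ncard + Z.ncard) :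
    (Y ∩ Z).Nonempty := by
  rw [← not_disjoint_iff_nonempty_inter]
  intro hdisj
  have := ncard_le_ncard (union_subset hY hZ) hX
  rw [ncard_union_eq hdisj (hX.subset hY) (hX.subset hZ)] at this
  omega

section Separations

variable {V : Type u} {G : SimpleGraph V} {A B S : Set V}

theorem IsSeparation.symm (h : IsSeparation G A B) : IsSeparation G B A :=
  ⟨by rw [union_comm, h.1], fun b hb a ha hab => h.2 a ha b hb hab.symm⟩

theorem sepOrder_comm (A B : Set V) : sepOrder A B = sepOrder B A := by
  rw [sepOrder, sepOrder, inter_comm]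

theorem IsSeparation.mem_sdiff_of_notMem_inter (h : IsSeparation G A B) {v : V}
    (hv : v ∉ A ∩ B) : v ∈ A \ B ∨ v ∈ B \ A := by
  have hAB : v ∈ A ∪ B := h.1 ▸ mem_univ v
  by_cases hA : v ∈ A <;> by_cases hB : v ∈ B <;> simp_all

theorem IsSeparation.image_supp_subset_sdiff_of_mem (h : IsSeparation G A B) (hS : A ∩ B ⊆ S)
    {C : (G.induce Sᶜ).ConnectedComponent} {v : ↥Sᶜ} (hv : v ∈ C.supp) (hvA : ↑v ∈ A \ B) :
    Subtype.val '' C.supp ⊆ A \ B := by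
  rintro _ ⟨w, hw, rfl⟩
  have hreach : (G.induce Sᶜ).Reachable v w :=
    ConnectedComponent.exact (hv.trans hw.symm)
  refine hreach.mem_of_forall_adj (s := {x : ↥Sᶜ | (x : V) ∈ A \ B}) (fun x y hxy hx => ?_) hvA
  rcases h.mem_sdiff_of_notMem_inter (fun hy => y.2 (hS hy)) with hy | hy
  · exact hy
  · exact absurd hxy (h.2 x hx y hy)

theorem IsSeparation.image_supp_subset_or (h : IsSeparation G A B) (hS : A ∩ B ⊆ S)
    (C : (G.induce Sᶜ).ConnectedComponent) :
    Subtype.val '' C.supp ⊆ A \ B ∨ Subtype.val '' C.supp ⊆ B \ A := by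
  obtain ⟨v, hv⟩ := C.nonempty_supp
  rcases h.mem_sdiff_of_notMem_inter (fun hvS => v.2 (hS hvS)) with hvA | hvB
  · exact Or.inl (h.image_supp_subset_sdiff_of_mem hS hv hvA)
  · exact Or.inr (h.symm.image_supp_subset_sdiff_of_mem (inter_comm A B ▸ hS) hv hvB)

end Separations

section Linked

variable {V : Type u} {G : SimpleGraph V} {m : ℕ} {α : ℝ} {X S : Set V}

theorem IsLinked.finite (hX : IsLinked G m α X) (hα : 0 ≤ α) : X.Finite := by
  by_contra hinf
  refine hX ⟨X, by simp [Infinite.ncard hinf], fun C => ?_⟩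
  have hempty : Subtype.val '' C.supp ∩ X = ∅ := by
    rw [eq_empty_iff_forall_notMem]
    rintro _ ⟨⟨w, -, rfl⟩, hwX⟩
    exact w.2 hwX
  rw [hempty, ncard_empty, Nat.cast_zero]
  positivity

theorem IsLinked.exists_lt_ncard (hX : IsLinked G m α X) (hS : S.ncard ≤ m) :
    ∃ C : (G.induce Sᶜ).ConnectedComponent,
      α * X.ncard < ((Subtype.val '' C.supp ∩ X).ncard : ℝ) := by
  by_contra! h
  exact hX ⟨S, hS, h⟩

theorem lt_ncard_inter_of_image_supp_subset {C : (G.induce Sᶜ).ConnectedComponent} {A : Set V}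
    (hX : X.Finite) (hC : α * X.ncard < ((Subtype.val '' C.supp ∩ X).ncard : ℝ))
    (hCA : Subtype.val '' C.supp ⊆ A) : α * X.ncard < ((X ∩ A).ncard : ℝ) :=
  hC.trans_le <| Nat.cast_le.mpr <|
    ncard_le_ncard (fun _ hx => ⟨hx.2, hCA hx.1⟩) (hX.subset inter_subset_left)

theorem IsSeparation.image_supp_subset_of_lt_ncard {A B : Set V} (h : IsSeparation G A B)
    (hS : A ∩ B ⊆ S) (hα : 1 / 2 ≤ α) (hX : X.Finite) (hB : α * X.ncard < ((X ∩ B).ncard : ℝ))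
    {C : (G.induce Sᶜ).ConnectedComponent}
    (hC : α * X.ncard < ((Subtype.val '' C.supp ∩ X).ncard : ℝ)) :
    Subtype.val '' C.supp ⊆ B \ A := by
  refine (h.image_supp_subset_or hS C).resolve_left fun hCA => ?_
  have hbig : X.ncard < (Subtype.val '' C.supp ∩ X).ncard + (X ∩ B).ncard := by
    have hX0 : (0 : ℝ) ≤ X.ncard := Nat.cast_nonneg _
    have : (X.ncard : ℝ) < (Subtype.val '' C.supp ∩ X).ncard + (X ∩ B).ncard := by nlinarith
    exact_mod_cast this
  obtain ⟨x, hxC, hxB⟩ :=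
    inter_nonempty_of_ncard_lt_ncard_add_ncard hX inter_subset_right inter_subset_left hbig
  exact (hCA hxC.1).2 hxB.2

theorem image_supp_inter_nonempty_of_lt_ncard (hα : 0 ≤ α)
    {C : (G.induce Sᶜ).ConnectedComponent}
    (hC : α * X.ncard < ((Subtype.val '' C.supp ∩ X).ncard : ℝ)) :
    (Subtype.val '' C.supp ∩ X).Nonempty := by
  refine nonempty_of_ncard_ne_zero fun h0 => ?_
  rw [h0, Nat.cast_zero] at hC
  exact hC.not_ge (by positivity)

theorem IsLinked.lt_ncard_inter_iff {A B : Set V} (hX : IsLinked G m α X) (hα : 1 / 2 ≤ α)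
    (h : IsSeparation G A B) (hord : sepOrder A B ≤ m) :
    α * X.ncard < ((X ∩ B).ncard : ℝ) ↔ ¬ α * X.ncard < ((X ∩ A).ncard : ℝ) := by
  have hα0 : 0 ≤ α := by linarith
  have hXfin := hX.finite hα0
  obtain ⟨C, hC⟩ := hX.exists_lt_ncard (S := A ∩ B) hord
  obtain ⟨x, hxC, -⟩ := image_supp_inter_nonempty_of_lt_ncard hα0 hC
  constructor
  · intro hB hA
    have hCB := h.image_supp_subset_of_lt_ncard subset_rfl hα hXfin hB hC
    have hCA := h.symm.image_supp_subset_of_lt_ncard (inter_comm B A).le hα hXfin hA hC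
    exact (hCB hxC).2 (hCA hxC).1
  · intro hA
    rcases h.image_supp_subset_or subset_rfl C with hCA | hCB
    · exact absurd (lt_ncard_inter_of_image_supp_subset hXfin hC (hCA.trans sdiff_subset)) hA
    · exact lt_ncard_inter_of_image_supp_subset hXfin hC (hCB.trans sdiff_subset)

theorem IsLinked.not_tripleCovers {A₁ B₁ A₂ B₂ A₃ B₃ : Set V} (hX : IsLinked G m α X)
    (hα : 1 / 2 ≤ α) (h₁ : IsSeparation G A₁ B₁) (h₂ : IsSeparation G A₂ B₂)
    (h₃ : IsSeparation G A₃ B₃) (hord : sepOrder A₁ B₁ + sepOrder A₂ B₂ + sepOrder A₃ B₃ ≤ m)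
    (hB₁ : α * X.ncard < ((X ∩ B₁).ncard : ℝ)) (hB₂ : α * X.ncard < ((X ∩ B₂).ncard : ℝ))
    (hB₃ : α * X.ncard < ((X ∩ B₃).ncard : ℝ)) : ¬ TripleCovers G A₁ A₂ A₃ := by
  rintro ⟨hcov, -⟩
  have hα0 : 0 ≤ α := by linarith
  have hXfin := hX.finite hα0
  set S := A₁ ∩ B₁ ∪ A₂ ∩ B₂ ∪ A₃ ∩ B₃
  have hS : S.ncard ≤ m :=
    ((ncard_union_le _ _).trans (Nat.add_le_add_right (ncard_union_le _ _) _)).trans hord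
  obtain ⟨C, hC⟩ := hX.exists_lt_ncard hS
  obtain ⟨x, hxC, -⟩ := image_supp_inter_nonempty_of_lt_ncard hα0 hC
  rcases hcov ▸ mem_univ x with (hx | hx) | hx
  · exact (h₁.image_supp_subset_of_lt_ncard (subset_union_left.trans subset_union_left)
      hα hXfin hB₁ hC hxC).2 hx
  · exact (h₂.image_supp_subset_of_lt_ncard (subset_union_right.trans subset_union_left)
      hα hXfin hB₂ hC hxC).2 hx
  · exact (h₃.image_supp_subset_of_lt_ncard subset_union_right hα hXfin hB₃ hC hxC).2 hx

end Linked

theorem isTangle_of_linked_general {V : Type u} (G : SimpleGraph V) (k : ℕ) (α : ℝ)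
    (hα : α ∈ Set.Ico (2 / 3 : ℝ) 1) (X : Set V)
    (hX : IsLinked G (3 * k) α X) :
    IsTangle G (k + 1)
      {p : Set V × Set V | IsSeparation G p.1 p.2 ∧ sepOrder p.1 p.2 ≤ k ∧
        α * X.ncard < ((X ∩ p.2).ncard : ℝ)} := by
  have hhalf : 1 / 2 ≤ α := by linarith [hα.1]
  refine ⟨fun p hp => ⟨hp.1, Nat.lt_succ_of_le hp.2.1⟩, fun A B hAB hord => ?_, ?_⟩
  · rw [Nat.lt_succ_iff] at hord
    have hiff := hX.lt_ncard_inter_iff hhalf hAB (hord.trans (by omega))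
    simp only [mem_ofPred_eq, hAB, hAB.symm, hord, sepOrder_comm B A, true_and, hiff]
  · rintro p₁ ⟨h₁, o₁, b₁⟩ p₂ ⟨h₂, o₂, b₂⟩ p₃ ⟨h₃, o₃, b₃⟩
    exact hX.not_tripleCovers hhalf h₁ h₂ h₃ (by omega) b₁ b₂ b₃

/-- If `X` is a `(3k, α)`-linked set with `α ∈ [2/3, 1)`, then
`T_X = {(A,B) : separation of order ≤ k with |X ∩ B| > α|X|}` is a tangle of order `k+1`. -/
theorem isTangle_of_linked {V : Type u} [Fintype V] (G : SimpleGraph V) (k : ℕ) (α : ℝ)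
    (hα : α ∈ Set.Ico (2 / 3 : ℝ) 1) (X : Set V)
    (hX : IsLinked G (3 * k) α X) :
    IsTangle G (k + 1)
      {p : Set V × Set V | IsSeparation G p.1 p.2 ∧ sepOrder p.1 p.2 ≤ k ∧
        α * X.ncard < ((X ∩ p.2).ncard : ℝ)} :=
  isTangle_of_linked_general G k α hα X hX
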